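/- For every sequence (λ_m)_{m∈ℤ} of complex numbers, the operators E_n, H_n, F_n on R satisfy, for all n, m ∈ ℤ: [H_n, H_m] = 0, [H_n, E_m] = 2 E_{n+m}, [H_n, F_m] = −2 F_{n+m}, [E_n, F_m] = H_{n+m}, [E_n, E_m] = 0, and [F_n, F_m] = 0. In other words, the assignment e⊗tⁿ ↦ E_n, h⊗tⁿ ↦ H_n, f⊗tⁿ ↦ F_n defines a representation of the loop algebra sl(2,ℂ)⊗ℂ[t,t⁻¹] on R (that is, a representation of the affine algebra with the central element acting by 0). This is the boson realization of the Verma type module M(λ) with λ(c) = 0. -/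

import Mathlib

open MvPolynomial

/-- The ring `R = ℂ[x_m : m ∈ ℤ]`. -/
abbrev RSpace : Type := MvPolynomial ℤ ℂ

/-- `F_n` : multiplication by `x_n`.  (Applied to each polynomial, all the sums
appearing below are finite, so `∑ᶠ` computes the intended operators.) -/
noncomputable def Fop (n : ℤ) : RSpace → RSpace := fun q => X n * q

/-- `H_n = −λ_n · id − 2 Σ_{m∈ℤ} x_{n+m} ∂_m`. -/
noncomputable def Hop (lam : ℤ → ℂ) (n : ℤ) : RSpace → RSpace := fun q =>
  -(lam n) • q - (2 : ℂ) • ∑ᶠ m : ℤ, X (n + m) * pderiv m q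

/-- `E_n = −Σ_{m,k∈ℤ} x_{n+m+k} ∂_m ∂_k − Σ_{m∈ℤ} λ_{n+m} ∂_m`. -/
noncomputable def Eop (lam : ℤ → ℂ) (n : ℤ) : RSpace → RSpace := fun q =>
  -(∑ᶠ mk : ℤ × ℤ, X (n + mk.1 + mk.2) * pderiv mk.1 (pderiv mk.2 q))
    - ∑ᶠ m : ℤ, lam (n + m) • pderiv m q

/-- Commutator of two operators. -/
noncomputable def opComm (A B : RSpace → RSpace) : RSpace → RSpace :=
  fun q => A (B q) - B (A q)

/-!
Every operator involved is a multiplication operator or has the shape `∑ᵢ Aᵢ ∂ᵢ` (a finite sum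
on each polynomial): `H_n = -λ_n - 2 D_n` with `D_n = ∑ₘ x_{n+m} ∂ₘ`, and
`E_n = -∑ₖ D_{n+k} ∂ₖ - ∑ₘ λ_{n+m} ∂ₘ`. The Leibniz rule `[∑ᵢ Aᵢ ∂ᵢ, x_j] = A_j + ∑ᵢ [Aᵢ, x_j] ∂ᵢ`
gives `[H_n, F_m] = -2 F_{n+m}` and `[E_n, F_m] = H_{n+m}` at once. A linear endomorphism of a
polynomial ring is determined by its value at `1` and its commutators with the multiplications by
the variables, so by the Jacobi identity `[H, H]`, `[H, E]` and `[E, E]` reduce, in this order, to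
the commutators with `F` already known.
-/

attribute [local instance] LieRing.ofAssociativeRing

open LinearMap (mulLeft)

namespace MvPolynomial

variable {σ R : Type*} [CommRing R]

theorem pderiv_comm (i j : σ) (p : MvPolynomial σ R) :
    pderiv i (pderiv j p) = pderiv j (pderiv i p) := by
  classical
  have h : ⁅pderiv i, pderiv j⁆ = (0 : Derivation R (MvPolynomial σ R) (MvPolynomial σ R)) :=
    derivation_ext fun k => by
      rw [Derivation.commutator_apply, pderiv_X, pderiv_X]
      by_cases hi : i = k <;> by_cases hj : j = k <;> simp [hi, hj]
  simpa [Derivation.commutator_apply, sub_eq_zero] using congr($h p)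

theorem linearMap_ext_of_lie_mulLeft_X {A B : Module.End R (MvPolynomial σ R)} (h1 : A 1 = B 1)
    (hX : ∀ i, ⁅A, mulLeft R (X i : MvPolynomial σ R)⁆ = ⁅B, mulLeft R (X i)⁆) : A = B := by
  refine LinearMap.ext fun p => ?_
  induction p using MvPolynomial.induction_on with
  | C a => rw [C_eq_smul_one, map_smul, map_smul, h1]
  | add p q hp hq => rw [map_add, map_add, hp, hq]
  | mul_X p i hp =>
    have h := congr($(hX i) p)
    simp only [Ring.lie_def, LinearMap.sub_apply, Module.End.mul_apply,
      LinearMap.mulLeft_apply] at h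
    rw [mul_comm]
    linear_combination h + X i * hp

theorem lie_mulLeft_mulLeft (a b : MvPolynomial σ R) : ⁅mulLeft R a, mulLeft R b⁆ = 0 := by
  rw [Ring.lie_def, Module.End.mul_eq_comp, Module.End.mul_eq_comp, ← LinearMap.mulLeft_mul,
    ← LinearMap.mulLeft_mul, mul_comm, sub_self]

variable (A : σ → Module.End R (MvPolynomial σ R))

theorem support_apply_pderiv_subset {p : MvPolynomial σ R} {s : Set σ}
    (hs : ∀ i ∉ s, pderiv i p = 0) : Function.support (fun i => A i (pderiv i p)) ⊆ s :=
  fun i hi => by_contra fun h => hi (by simp only [hs i h, map_zero])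

theorem hasFiniteSupport_apply_pderiv (p : MvPolynomial σ R) :
    Function.HasFiniteSupport (fun i => A i (pderiv i p)) :=
  p.vars.finite_toSet.subset
    (support_apply_pderiv_subset A fun _ hi => pderiv_eq_zero_of_notMem_vars hi)

noncomputable def sumPderiv : Module.End R (MvPolynomial σ R) where
  toFun p := ∑ᶠ i, A i (pderiv i p)
  map_add' p q := by
    simp only [map_add]
    exact finsum_add_distrib (hasFiniteSupport_apply_pderiv A p)
      (hasFiniteSupport_apply_pderiv A q)
  map_smul' c p := by
    simp only [Derivation.map_smul, map_smul, RingHom.id_apply]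
    exact (smul_finsum' c (hasFiniteSupport_apply_pderiv A p)).symm

theorem sumPderiv_apply (p : MvPolynomial σ R) : sumPderiv A p = ∑ᶠ i, A i (pderiv i p) := rfl

theorem sumPderiv_apply_eq_sum {p : MvPolynomial σ R} {s : Finset σ}
    (hs : ∀ i ∉ s, pderiv i p = 0) : sumPderiv A p = ∑ i ∈ s, A i (pderiv i p) :=
  finsum_eq_sum_of_support_subset _ (support_apply_pderiv_subset A (s := s) hs)

@[simp]
theorem sumPderiv_zero : sumPderiv (fun _ => 0 : σ → Module.End R (MvPolynomial σ R)) = 0 :=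
  LinearMap.ext fun p => by simp [sumPderiv_apply]

theorem sumPderiv_one : sumPderiv A 1 = 0 := by simp [sumPderiv_apply]

theorem sumPderiv_lie_mulLeft_X (j : σ) :
    ⁅sumPderiv A, mulLeft R (X j)⁆ = A j + sumPderiv fun i => ⁅A i, mulLeft R (X j)⁆ := by
  classical
  refine LinearMap.ext fun p => ?_
  have hp : ∀ i ∉ insert j p.vars, pderiv i p = 0 := fun i hi =>
    pderiv_eq_zero_of_notMem_vars fun h => hi (Finset.mem_insert_of_mem h)
  have hXp : ∀ i ∉ insert j p.vars, pderiv i (X j * p) = 0 := fun i hi => by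
    rw [Finset.mem_insert, not_or] at hi
    rw [pderiv_mul, pderiv_X_of_ne (Ne.symm hi.1), pderiv_eq_zero_of_notMem_vars hi.2]
    simp
  have hδ : ∑ i ∈ insert j p.vars, A i (pderiv i (X j) * p) = A j p :=
    (Finset.sum_eq_single j (fun i _ hij => by simp [pderiv_X_of_ne (Ne.symm hij)])
      (fun h => absurd (Finset.mem_insert_self j _) h)).trans (by simp)
  simp only [Ring.lie_def, LinearMap.sub_apply, LinearMap.add_apply, Module.End.mul_apply,
    LinearMap.mulLeft_apply]
  rw [sumPderiv_apply_eq_sum A hXp, sumPderiv_apply_eq_sum A hp, sumPderiv_apply_eq_sum _ hp]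
  simp only [LinearMap.sub_apply, Module.End.mul_apply, LinearMap.mulLeft_apply,
    pderiv_mul, map_add, Finset.sum_add_distrib, hδ, Finset.sum_sub_distrib, Finset.mul_sum]
  abel

theorem sumPderiv_mulLeft_lie_mulLeft_X (c : σ → MvPolynomial σ R) (j : σ) :
    ⁅sumPderiv fun i => mulLeft R (c i), mulLeft R (X j)⁆ = mulLeft R (c j) := by
  simp [sumPderiv_lie_mulLeft_X, lie_mulLeft_mulLeft]

end MvPolynomial

open MvPolynomial

noncomputable def shiftEuler (n : ℤ) : Module.End ℂ RSpace :=
  sumPderiv fun m => mulLeft ℂ (X (n + m))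

noncomputable def weightDeriv (lam : ℤ → ℂ) (n : ℤ) : Module.End ℂ RSpace :=
  sumPderiv fun m => lam (n + m) • 1

noncomputable def shiftLaplacian (n : ℤ) : Module.End ℂ RSpace :=
  sumPderiv fun k => shiftEuler (n + k)

noncomputable def fEnd (n : ℤ) : Module.End ℂ RSpace := mulLeft ℂ (X n)

noncomputable def hEnd (lam : ℤ → ℂ) (n : ℤ) : Module.End ℂ RSpace :=
  -lam n • 1 - (2 : ℂ) • shiftEuler n

noncomputable def eEnd (lam : ℤ → ℂ) (n : ℤ) : Module.End ℂ RSpace :=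
  -shiftLaplacian n - weightDeriv lam n

theorem coe_fEnd (n : ℤ) : ⇑(fEnd n) = Fop n := rfl

theorem coe_hEnd (lam : ℤ → ℂ) (n : ℤ) : ⇑(hEnd lam n) = Hop lam n := by
  funext q
  simp [hEnd, Hop, shiftEuler, sumPderiv_apply]

theorem shiftLaplacian_apply (n : ℤ) (q : RSpace) :
    shiftLaplacian n q = ∑ᶠ mk : ℤ × ℤ, X (n + mk.1 + mk.2) * pderiv mk.1 (pderiv mk.2 q) := by
  have hfin : Function.HasFiniteSupport
      fun km : ℤ × ℤ => X (n + km.2 + km.1) * pderiv km.2 (pderiv km.1 q) := by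
    refine (q.vars ×ˢ q.vars).finite_toSet.subset fun km hkm => ?_
    have h1 : km.1 ∈ q.vars :=
      by_contra fun h => hkm (by simp [pderiv_eq_zero_of_notMem_vars h])
    have h2 : km.2 ∈ q.vars :=
      by_contra fun h => hkm (by simp [pderiv_comm km.2, pderiv_eq_zero_of_notMem_vars h])
    exact Finset.mem_coe.2 (Finset.mem_product.2 ⟨h1, h2⟩)
  rw [← finsum_comp_equiv (Equiv.prodComm ℤ ℤ)]
  simp only [Equiv.prodComm_apply, Prod.fst_swap, Prod.snd_swap]
  rw [finsum_curry _ hfin]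
  simp only [shiftLaplacian, shiftEuler, sumPderiv_apply, LinearMap.mulLeft_apply,
    add_right_comm n]

theorem coe_eEnd (lam : ℤ → ℂ) (n : ℤ) : ⇑(eEnd lam n) = Eop lam n := by
  funext q
  simp [eEnd, Eop, shiftLaplacian_apply, weightDeriv, sumPderiv_apply]

theorem opComm_coe (A B : Module.End ℂ RSpace) : opComm ⇑A ⇑B = ⇑⁅A, B⁆ := rfl

theorem smul_one_lie {R A : Type*} [CommRing R] [Ring A] [Algebra R A] (c : R) (a : A) :
    ⁅c • (1 : A), a⁆ = 0 := by
  simp [Ring.lie_def]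

theorem shiftEuler_lie_fEnd (n j : ℤ) : ⁅shiftEuler n, fEnd j⁆ = fEnd (n + j) :=
  sumPderiv_mulLeft_lie_mulLeft_X _ j

theorem weightDeriv_lie_fEnd (lam : ℤ → ℂ) (n j : ℤ) :
    ⁅weightDeriv lam n, fEnd j⁆ = lam (n + j) • 1 := by
  simp [weightDeriv, fEnd, sumPderiv_lie_mulLeft_X, smul_one_lie]

theorem shiftLaplacian_lie_fEnd (n j : ℤ) :
    ⁅shiftLaplacian n, fEnd j⁆ = (2 : ℂ) • shiftEuler (n + j) := by
  rw [shiftLaplacian, fEnd, sumPderiv_lie_mulLeft_X, ← fEnd]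
  simp only [shiftEuler_lie_fEnd, add_right_comm n _ j]
  rw [two_smul]
  rfl

theorem hEnd_lie_fEnd (lam : ℤ → ℂ) (n m : ℤ) :
    ⁅hEnd lam n, fEnd m⁆ = (-2 : ℂ) • fEnd (n + m) := by
  rw [hEnd, sub_lie, smul_one_lie, smul_lie (2 : ℂ) (shiftEuler n), shiftEuler_lie_fEnd,
    zero_sub]
  module

theorem eEnd_lie_fEnd (lam : ℤ → ℂ) (n m : ℤ) :
    ⁅eEnd lam n, fEnd m⁆ = hEnd lam (n + m) := by
  rw [eEnd, hEnd, sub_lie, neg_lie, shiftLaplacian_lie_fEnd, weightDeriv_lie_fEnd]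
  module

theorem hEnd_apply_one (lam : ℤ → ℂ) (n : ℤ) : hEnd lam n 1 = -lam n • 1 := by
  simp [hEnd, shiftEuler, sumPderiv_one]

theorem eEnd_apply_one (lam : ℤ → ℂ) (n : ℤ) : eEnd lam n 1 = 0 := by
  simp [eEnd, shiftLaplacian, weightDeriv, sumPderiv_one]

theorem ext_of_lie_fEnd {A B : Module.End ℂ RSpace} (h1 : A 1 = B 1)
    (hF : ∀ k, ⁅A, fEnd k⁆ = ⁅B, fEnd k⁆) : A = B :=
  linearMap_ext_of_lie_mulLeft_X h1 hF

theorem hEnd_lie_hEnd (lam : ℤ → ℂ) (n m : ℤ) : ⁅hEnd lam n, hEnd lam m⁆ = 0 := by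
  refine ext_of_lie_fEnd ?_ fun k => ?_
  · simp [Ring.lie_def, hEnd_apply_one, smul_smul, mul_comm]
  · rw [lie_lie, hEnd_lie_fEnd, hEnd_lie_fEnd, lie_smul (-2 : ℂ) (hEnd lam n) (fEnd (m + k)),
      lie_smul (-2 : ℂ) (hEnd lam m) (fEnd (n + k)), hEnd_lie_fEnd, hEnd_lie_fEnd,
      add_left_comm, sub_self, zero_lie]

theorem hEnd_lie_eEnd (lam : ℤ → ℂ) (n m : ℤ) :
    ⁅hEnd lam n, eEnd lam m⁆ = (2 : ℂ) • eEnd lam (n + m) := by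
  refine ext_of_lie_fEnd ?_ fun k => ?_
  · simp [Ring.lie_def, hEnd_apply_one, eEnd_apply_one]
  · rw [lie_lie, eEnd_lie_fEnd, hEnd_lie_fEnd, hEnd_lie_hEnd,
      lie_smul (-2 : ℂ) (eEnd lam m) (fEnd (n + k)), eEnd_lie_fEnd,
      smul_lie (2 : ℂ) (eEnd lam (n + m)) (fEnd k), eEnd_lie_fEnd,
      show m + (n + k) = n + m + k by ring]
    module

theorem eEnd_lie_eEnd (lam : ℤ → ℂ) (n m : ℤ) : ⁅eEnd lam n, eEnd lam m⁆ = 0 := by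
  refine ext_of_lie_fEnd ?_ fun k => ?_
  · simp [Ring.lie_def, eEnd_apply_one]
  · rw [lie_lie, eEnd_lie_fEnd, eEnd_lie_fEnd, ← lie_skew, hEnd_lie_eEnd, ← lie_skew (eEnd lam m),
      hEnd_lie_eEnd, show n + k + m = m + k + n by ring, sub_self, zero_lie]

theorem fEnd_lie_fEnd (n m : ℤ) : ⁅fEnd n, fEnd m⁆ = 0 :=
  lie_mulLeft_mulLeft _ _

/-- the operators `E_n, H_n, F_n` satisfy the commutation relations of
the loop algebra `sl(2,ℂ) ⊗ ℂ[t,t⁻¹]`: `[H_n,H_m] = 0`, `[H_n,E_m] = 2E_{n+m}`,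
`[H_n,F_m] = −2F_{n+m}`, `[E_n,F_m] = H_{n+m}`, `[E_n,E_m] = [F_n,F_m] = 0`;
i.e. they define a representation of the loop algebra (central element acting by 0). -/
theorem loop_sl2_relations (lam : ℤ → ℂ) (n m : ℤ) :
    opComm (Hop lam n) (Hop lam m) = 0 ∧
    opComm (Hop lam n) (Eop lam m) = (2 : ℂ) • Eop lam (n + m) ∧
    opComm (Hop lam n) (Fop m) = (-2 : ℂ) • Fop (n + m) ∧
    opComm (Eop lam n) (Fop m) = Hop lam (n + m) ∧
    opComm (Eop lam n) (Eop lam m) = 0 ∧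
    opComm (Fop n) (Fop m) = 0 := by
  simp only [← coe_hEnd, ← coe_eEnd, ← coe_fEnd, opComm_coe, hEnd_lie_hEnd, hEnd_lie_eEnd,
    hEnd_lie_fEnd, eEnd_lie_fEnd, eEnd_lie_eEnd, fEnd_lie_fEnd, LinearMap.coe_smul,
    LinearMap.coe_zero_iff, and_self]
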